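/- (Graded Dilation Lemma, linear case) Let A be a commutative Noetherian ℕ-graded ring with 1 and n ≥ 3. Let s ∈ A_0 be a non-zerodivisor and α ∈ GL_n(A) with α^+(0) = I_n. If the image α_s of α in GL_n(A_s) lies in E_n(A_s), then there exists l_0 ∈ ℕ such that for all l ≥ l_0 one has α^+(s^l) ∈ E_n(A). -/

import Mathlib

open Matrix

/-- The Swan–Weibel map `b ↦ b⁺(a) = Σ_i b_i * a ^ i`, where `b = Σ_i b_i` is the
decomposition of `b` into its homogeneous components `b_i ∈ 𝒜 i`. -/
noncomputable def swPlus {A : Type*} [CommRing A] (𝒜 : ℕ → AddSubgroup A) [GradedRing 𝒜]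
    (a b : A) : A :=
  DirectSum.toAddMonoid
    (fun i => (AddMonoidHom.mulRight (a ^ i)).comp (𝒜 i).subtype)
    (DirectSum.decompose 𝒜 b)

/-- The Swan–Weibel map `α ↦ α⁺(a)` applied entrywise to a square matrix;
in particular `swMatrix 𝒜 0 α` is the degree-zero part of `α`. -/
noncomputable def swMatrix {A : Type*} [CommRing A] (𝒜 : ℕ → AddSubgroup A) [GradedRing 𝒜]
    {n : ℕ} (a : A) (α : Matrix (Fin n) (Fin n) A) : Matrix (Fin n) (Fin n) A :=
  Matrix.of fun i j => swPlus 𝒜 a (α i j)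

/-- The degree-zero subring `A₀` of `A`. -/
def gradeZero {A : Type*} [CommRing A] (𝒜 : ℕ → AddSubgroup A) [GradedRing 𝒜] :
    Subring A :=
  SetLike.GradeZero.subring 𝒜

/-- The multiplicative subset `A₀ \ p` of `A`, for a prime ideal `p` of the degree-zero
subring `A₀`; localizing `A` at it gives `A_p`. -/
def primeComplIn {A : Type*} [CommRing A] (𝒜 : ℕ → AddSubgroup A) [GradedRing 𝒜]
    (p : Ideal ↥(gradeZero 𝒜)) (hp : p.IsPrime) : Submonoid A :=
  Submonoid.map (gradeZero 𝒜).subtype (@Ideal.primeCompl _ _ p hp)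

/-- `Eₙ(R)`: the subgroup of `GLₙ(R)` generated by the elementary matrices
`Eᵢⱼ(t) = 1 + t eᵢⱼ` (`i ≠ j`, `t ∈ R`), realized as the set of all products of
elementary matrices (the generating set is closed under inverses, so the submonoid
it generates coincides with the subgroup it generates). -/
def elemGroup (R : Type*) [CommRing R] (n : ℕ) : Submonoid (Matrix (Fin n) (Fin n) R) :=
  Submonoid.closure
    {M | ∃ (i j : Fin n) (t : R), i ≠ j ∧ M = 1 + Matrix.single i j t}

section sw
variable {A : Type*} [CommRing A] (𝒜 : ℕ → AddSubgroup A) [GradedRing 𝒜]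

lemma swPlus_of_mem {i : ℕ} (a : A) {x : A} (hx : x ∈ 𝒜 i) : swPlus 𝒜 a x = x * a ^ i := by
  unfold swPlus
  rw [show x = ((⟨x, hx⟩ : 𝒜 i) : A) from rfl, DirectSum.decompose_coe, DirectSum.toAddMonoid_of]
  rfl

lemma swPlus_add (a b c : A) : swPlus 𝒜 a (b + c) = swPlus 𝒜 a b + swPlus 𝒜 a c := by
  unfold swPlus; rw [DirectSum.decompose_add, map_add]

lemma swPlus_zero (a : A) : swPlus 𝒜 a 0 = 0 := by
  unfold swPlus; rw [DirectSum.decompose_zero, map_zero]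

lemma swPlus_one (a : A) : swPlus 𝒜 a 1 = 1 := by
  rw [swPlus_of_mem 𝒜 a SetLike.GradedOne.one_mem, pow_zero, one_mul]

lemma swPlus_mul (a b c : A) : swPlus 𝒜 a (b * c) = swPlus 𝒜 a b * swPlus 𝒜 a c := by
  induction b using DirectSum.Decomposition.inductionOn 𝒜 with
  | zero => simp [swPlus_zero]
  | add m m' hm hm' => rw [add_mul, swPlus_add, swPlus_add, hm, hm', add_mul]
  | homogeneous m =>
    induction c using DirectSum.Decomposition.inductionOn 𝒜 with
    | zero => simp [swPlus_zero]
    | add c c' hc hc' => rw [mul_add, swPlus_add, swPlus_add, hc, hc', mul_add]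
    | homogeneous c =>
      rw [swPlus_of_mem 𝒜 a m.2, swPlus_of_mem 𝒜 a c.2,
        swPlus_of_mem 𝒜 a (SetLike.mul_mem_graded m.2 c.2), pow_add]
      ring

lemma swPlus_of_mem_zero (u : A) {x : A} (hx : x ∈ 𝒜 0) : swPlus 𝒜 u x = x := by
  rw [swPlus_of_mem 𝒜 u hx, pow_zero, mul_one]

/-- The Swan–Weibel map as a ring homomorphism. -/
noncomputable def swPlusHom (a : A) : A →+* A where
  toFun := swPlus 𝒜 a
  map_one' := swPlus_one 𝒜 a
  map_mul' := swPlus_mul 𝒜 a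
  map_zero' := swPlus_zero 𝒜 a
  map_add' := swPlus_add 𝒜 a

lemma swPlus_sub_dvd (s : A) (l : ℕ) (a : A) :
    ∃ c : A, swPlus 𝒜 (s ^ l) a - swPlus 𝒜 0 a = s ^ l * c := by
  induction a using DirectSum.Decomposition.inductionOn 𝒜 with
  | zero => exact ⟨0, by rw [swPlus_zero, swPlus_zero, sub_self, mul_zero]⟩
  | add m m' hm hm' =>
    obtain ⟨c, hc⟩ := hm
    obtain ⟨c', hc'⟩ := hm'
    exact ⟨c + c', by rw [swPlus_add, swPlus_add]; linear_combination hc + hc'⟩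
  | homogeneous x =>
    rename_i i
    match i with
    | 0 =>
      refine ⟨0, ?_⟩
      rw [swPlus_of_mem 𝒜 _ x.2, swPlus_of_mem 𝒜 _ x.2]
      simp
    | (k+1) =>
      refine ⟨x * (s ^ l) ^ k, ?_⟩
      rw [swPlus_of_mem 𝒜 _ x.2, swPlus_of_mem 𝒜 _ x.2]
      rw [zero_pow (Nat.succ_ne_zero k), mul_zero, sub_zero, pow_succ]
      ring

end sw

namespace GDL
variable {R : Type*} [CommRing R] {n : ℕ}

abbrev Em (i j : Fin n) (t : R) : Matrix (Fin n) (Fin n) R := 1 + single i j t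

def elemDiv (R : Type*) [CommRing R] (n : ℕ) (s : R) (m : ℕ) :
    Submonoid (Matrix (Fin n) (Fin n) R) :=
  Submonoid.closure {M | ∃ (i j : Fin n) (x : R), i ≠ j ∧ M = 1 + single i j (s ^ m * x)}

lemma elemDiv_le (s : R) (m : ℕ) : elemDiv R n s m ≤ elemGroup R n :=
  Submonoid.closure_mono (fun M ⟨i, j, x, h, e⟩ => ⟨i, j, _, h, e⟩)

lemma gen_mem_elemDiv (s : R) (m : ℕ) {i j : Fin n} (hij : i ≠ j) (x : R) :
    Em i j (s ^ m * x) ∈ elemDiv R n s m :=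
  Submonoid.subset_closure ⟨i, j, x, hij, rfl⟩

lemma std_neg (i j : Fin n) (a : R) :
    single i j (-a) = -single i j a := by
  ext x y; simp only [single, of_apply, Matrix.neg_apply]; split <;> simp

lemma std_congr (i j : Fin n) {a b : R} (h : a = b) :
    single i j a = single i j b := by rw [h]

lemma expand2 (A B : Matrix (Fin n) (Fin n) R) :
    (1+A)*(1+B) = 1+A+B+A*B := by noncomm_ring

lemma expand3 (A B C : Matrix (Fin n) (Fin n) R) :
    (1+A)*(1+B)*(1+C) = 1+A+B+C+A*B+A*C+B*C+A*B*C := by noncomm_ring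

lemma Em_mul_same {i j : Fin n} (hij : j ≠ i) (a b : R) :
    Em i j a * Em i j b = Em i j (a + b) := by
  show (1 + single i j a) * (1 + single i j b) = _
  rw [mul_add, add_mul, add_mul, mul_one, one_mul, single_mul_single_of_ne (h := hij),
    show (1 : Matrix (Fin n) (Fin n) R) + single i j a * 1 + (single i j b + 0)
      = 1 + (single i j a + single i j b) by noncomm_ring, ← single_add]

lemma Em_mul_neg {i j : Fin n} (hij : j ≠ i) (a : R) :
    Em i j a * Em i j (-a) = 1 := by
  rw [Em_mul_same hij]
  show 1 + single i j (a + -a) = 1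
  rw [add_neg_cancel, single_zero, add_zero]

lemma caseA {p q i j : Fin n} (hqp : q ≠ p) (hqi : q ≠ i) (hjp : j ≠ p) (c z : R) :
    Em p q c * Em i j z * Em p q (-c) = Em i j z := by
  show (1 + single p q c) * (1 + single i j z) * (1 + single p q (-c)) = _
  rw [expand3, single_mul_single_of_ne (h := hqi), single_mul_single_of_ne (h := hqp),
    single_mul_single_of_ne (h := hjp), std_neg]
  noncomm_ring

lemma caseB {p i j : Fin n} (hpi : p ≠ i) (hij : i ≠ j) (hjp : j ≠ p) (c z : R) :
    Em p i c * Em i j z * Em p i (-c) = Em i j z * Em p j (c*z) := by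
  show (1 + single p i c) * (1 + single i j z) * (1 + single p i (-c))
    = (1 + single i j z) * (1 + single p j (c*z))
  rw [expand3, single_mul_single_same, single_mul_single_of_ne (h := (Ne.symm hpi)),
    single_mul_single_of_ne (h := hjp), single_mul_single_of_ne (h := hjp),
    expand2, single_mul_single_of_ne (h := hjp), std_neg]
  abel

lemma caseC {q i j : Fin n} (hjq : j ≠ q) (hqi : q ≠ i) (hij : i ≠ j) (c z : R) :
    Em j q c * Em i j z * Em j q (-c) = Em i j z * Em i q (z*(-c)) := by
  show (1 + single j q c) * (1 + single i j z) * (1 + single j q (-c))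
    = (1 + single i j z) * (1 + single i q (z*(-c)))
  rw [expand3, single_mul_single_of_ne (h := hqi), single_mul_single_of_ne (h := (Ne.symm hjq)),
    single_mul_single_same, zero_mul,
    expand2, single_mul_single_of_ne (h := (Ne.symm hij)), std_neg]
  abel

lemma comm4 {M : Type*} [Ring M] (P Q : M) (hP : P*P = 0) (hQ : Q*Q = 0) (hQP : Q*P = 0) :
    (1+P)*(1+Q)*(1-P)*(1-Q) = 1 + P*Q := by
  have e2 : (1+P)*(1+Q)*(1-P) = 1+Q+P*Q - P*P - Q*P - P*(Q*P) := by noncomm_ring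
  have e3 : (1+Q+P*Q)*(1-Q) = 1+P*Q - Q*Q - P*(Q*Q) := by noncomm_ring
  rw [e2, hP, hQP, mul_zero, sub_zero, sub_zero, sub_zero, e3, hQ, mul_zero, sub_zero, sub_zero]

lemma pairRow {i j k : Fin n} (hkj : k ≠ j) (a b : R) :
    Em i k a * Em j k b = 1 + (single i k a + single j k b) := by
  rw [expand2, single_mul_single_of_ne (h := hkj)]; abel

lemma pairCol {i j k : Fin n} (hik : i ≠ k) (a b : R) :
    Em k i a * Em k j b = 1 + (single k i a + single k j b) := by
  rw [expand2, single_mul_single_of_ne (h := hik)]; abel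

lemma caseD {i j k : Fin n} (hij : i ≠ j) (hik : i ≠ k) (hjk : j ≠ k) (c z₁ z₂ : R) :
    Em j i c * Em i j (z₁*z₂) * Em j i (-c) =
      ((Em i k z₁ * Em j k (z₁*c)) * (Em k i (-(z₂*c)) * Em k j z₂)) *
      ((Em i k (-z₁) * Em j k (-(z₁*c))) * (Em k i (z₂*c) * Em k j (-z₂))) := by
  have hP : (single i k z₁ + single j k (z₁*c)) *
      (single i k z₁ + single j k (z₁*c)) = 0 := by
    rw [add_mul, mul_add, mul_add, single_mul_single_of_ne (h := hik.symm),
      single_mul_single_of_ne (h := hjk.symm), single_mul_single_of_ne (h := hik.symm),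
      single_mul_single_of_ne (h := hjk.symm)]
    abel
  have hQ : (single k i (-(z₂*c)) + single k j z₂) *
      (single k i (-(z₂*c)) + single k j z₂) = 0 := by
    rw [add_mul, mul_add, mul_add, single_mul_single_of_ne (h := hik),
      single_mul_single_of_ne (h := hik), single_mul_single_of_ne (h := hjk),
      single_mul_single_of_ne (h := hjk)]
    abel
  have hQP : (single k i (-(z₂*c)) + single k j z₂) *
      (single i k z₁ + single j k (z₁*c)) = 0 := by
    rw [add_mul, mul_add, mul_add, single_mul_single_same,
      single_mul_single_of_ne (h := hij), single_mul_single_of_ne (h := hij.symm),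
      single_mul_single_same, add_zero, zero_add, ← single_add,
      std_congr k k (show -(z₂*c)*z₁ + z₂*(z₁*c) = 0 by ring), single_zero]
  have h3 : single i k (-z₁) + single j k (-(z₁*c))
      = -(single i k z₁ + single j k (z₁*c)) := by
    rw [std_neg, std_neg]; abel
  have h4 : single k i (z₂*c) + single k j (-z₂)
      = -(single k i (-(z₂*c)) + single k j z₂) := by
    have h5 := std_neg k i (-(z₂*c))
    rw [neg_neg] at h5
    rw [h5, std_neg k j z₂]; abel
  rw [pairRow hjk.symm, pairCol hik, pairRow hjk.symm, pairCol hik, h3, h4,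
    ← sub_eq_add_neg, ← sub_eq_add_neg, ← mul_assoc,
    comm4 _ _ hP hQ hQP]
  show (1 + single j i c) * (1 + single i j (z₁*z₂)) * (1 + single j i (-c)) = _
  rw [expand3, add_mul, mul_add, mul_add]
  simp only [single_mul_single_same, single_mul_single_of_ne (h := hij), mul_zero, zero_mul,
    add_zero, zero_add]
  rw [std_neg j i c,
    std_congr i i (show z₁ * -(z₂*c) = z₁*z₂ * -c by ring),
    std_congr j i (show z₁*c * -(z₂*c) = c*(z₁*z₂) * -c by ring),
    std_congr j j (show z₁*c*z₂ = c*(z₁*z₂) by ring)]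
  rw [mul_neg, single_mul_single_of_ne (h := hij), neg_zero]
  abel


lemma map_Em {S : Type*} [CommRing S] (f : R →+* S) (i j : Fin n) (t : R) :
    (Em i j t).map f = Em i j (f t) := by
  ext x y
  simp only [Matrix.map_apply, Matrix.add_apply, Matrix.one_apply, single, of_apply]
  split <;> split <;> simp

lemma pow_split {A B : Type*} [CommRing A] [CommRing B] (f : A →+* B) (s : A) {m t : ℕ}
    (h : m ≤ t) (y : A) : f s ^ t * f y = f (s ^ m * (s ^ (t - m) * y)) := by
  rw [_root_.map_mul, _root_.map_mul, map_pow, map_pow, ← mul_assoc, ← pow_add, Nat.add_sub_cancel' h]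

theorem conj_dilation {A B : Type*} [CommRing A] [CommRing B] (f : A →+* B) (s : A)
    (hsurj : ∀ t : B, ∃ (a : A) (e : ℕ), t * f s ^ e = f a)
    {n : ℕ} (hn : 3 ≤ n) {M : Matrix (Fin n) (Fin n) B} (hM : M ∈ elemGroup B n) :
    ∃ Minv : Matrix (Fin n) (Fin n) B, M * Minv = 1 ∧ Minv * M = 1 ∧
      ∀ m : ℕ, ∃ N : ℕ, ∀ (i j : Fin n) (x : A) (l : ℕ), i ≠ j → N ≤ l →
        ∃ ε ∈ elemDiv A n s m, M * (1 + single i j (f s ^ l * f x)) * Minv = ε.map f := by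
  induction hM using Submonoid.closure_induction with
  | one =>
    refine ⟨1, one_mul 1, one_mul 1, fun m => ⟨m, fun i j x l hij hl => ?_⟩⟩
    refine ⟨Em i j (s ^ m * (s ^ (l - m) * x)), gen_mem_elemDiv s m hij _, ?_⟩
    rw [map_Em, one_mul, mul_one, ← pow_split f s hl]
  | mul M₁ M₂ hM₁ hM₂ ih₁ ih₂ =>
    obtain ⟨M₁inv, h₁r, h₁l, P₁⟩ := ih₁
    obtain ⟨M₂inv, h₂r, h₂l, P₂⟩ := ih₂
    refine ⟨M₂inv * M₁inv, ?_, ?_, ?_⟩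
    · calc M₁ * M₂ * (M₂inv * M₁inv) = M₁ * (M₂ * M₂inv) * M₁inv := by simp only [mul_assoc]
      _ = 1 := by rw [h₂r, mul_one, h₁r]
    · calc M₂inv * M₁inv * (M₁ * M₂) = M₂inv * (M₁inv * M₁) * M₂ := by simp only [mul_assoc]
      _ = 1 := by rw [h₁l, mul_one, h₂l]
    · intro m
      obtain ⟨N₁, hP₁⟩ := P₁ m
      obtain ⟨N₂, hP₂⟩ := P₂ N₁
      refine ⟨N₂, fun i j x l hij hl => ?_⟩
      obtain ⟨ε₂, hε₂, hconj₂⟩ := hP₂ i j x l hij hl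
      -- conjugating members of `elemDiv A n s N₁` by `M₁` lands in `elemDiv A n s m`
      have key : ∀ ε₂ ∈ elemDiv A n s N₁, ∃ ε ∈ elemDiv A n s m,
          M₁ * ε₂.map f * M₁inv = ε.map f := by
        intro ε₂ hε₂
        induction hε₂ using Submonoid.closure_induction with
        | one => exact ⟨1, one_mem _, by rw [Matrix.map_one f f.map_zero f.map_one,
            mul_one, h₁r]⟩
        | mem g hg =>
          obtain ⟨i', j', x', hij', rfl⟩ := hg
          obtain ⟨ε, hε, hc⟩ := hP₁ i' j' x' N₁ hij' le_rfl
          refine ⟨ε, hε, ?_⟩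
          rw [map_Em, _root_.map_mul, map_pow]
          exact hc
        | mul a b ha hb iha ihb =>
          obtain ⟨εa, hεa, hca⟩ := iha
          obtain ⟨εb, hεb, hcb⟩ := ihb
          refine ⟨εa * εb, mul_mem hεa hεb, ?_⟩
          rw [Matrix.map_mul, Matrix.map_mul, ← hca, ← hcb]
          calc M₁ * (a.map (⇑f) * b.map (⇑f)) * M₁inv
              = M₁ * a.map (⇑f) * (b.map (⇑f) * M₁inv) := by simp only [mul_assoc]
            _ = M₁ * a.map (⇑f) * (M₁inv * M₁ * (b.map (⇑f) * M₁inv)) := by rw [h₁l, one_mul]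
            _ = M₁ * a.map (⇑f) * M₁inv * (M₁ * b.map (⇑f) * M₁inv) := by simp only [mul_assoc]
      obtain ⟨ε, hε, hc⟩ := key ε₂ hε₂
      refine ⟨ε, hε, ?_⟩
      calc M₁ * M₂ * (1 + single i j (f s ^ l * f x)) * (M₂inv * M₁inv)
          = M₁ * (M₂ * (1 + single i j (f s ^ l * f x)) * M₂inv) * M₁inv := by
            simp only [mul_assoc]
        _ = ε.map f := by rw [hconj₂, hc]
  | mem Mg hg =>
    obtain ⟨p, q, c, hpq, rfl⟩ := hg
    obtain ⟨b, e, hbe⟩ := hsurj c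
    refine ⟨Em p q (-c), Em_mul_neg hpq.symm c, ?_, ?_⟩
    · rw [show (1 + single p q c : Matrix (Fin n) (Fin n) B) = Em p q c from rfl,
        Em_mul_same hpq.symm, neg_add_cancel]
      show 1 + single p q (0 : B) = 1
      rw [single_zero, add_zero]
    intro m
    refine ⟨2*(m+e)+2, fun i j x l hij hl => ?_⟩
    have hpowsplit : ∀ t : ℕ, e ≤ t → f s ^ t = f s ^ (t - e) * f s ^ e := by
      intro t h; rw [← pow_add, Nat.sub_add_cancel h]
    have hpow : ∀ t : ℕ, m ≤ t → f s ^ t = f (s ^ m * s ^ (t - m)) := by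
      intro t h; rw [_root_.map_mul, map_pow, map_pow, ← pow_add, Nat.add_sub_cancel' h]
    have hc : ∀ (t : ℕ) (y : A), m + e ≤ t →
        f s ^ t * f y * c = f (s ^ m * (s ^ (t - e - m) * (y * b))) := by
      intro t y h
      have h1 : f s ^ t * f y * c = f s ^ (t - e) * f (y * b) := by
        rw [hpowsplit t (le_trans (Nat.le_add_left e m) h), _root_.map_mul]
        linear_combination (f s ^ (t - e) * f y) * hbe
      rw [h1, pow_split f s (m := m) (t := t - e) (by omega) (y * b)]
    have hc1 : ∀ t : ℕ, m + e ≤ t → f s ^ t * c = f (s ^ m * (s ^ (t - e - m) * b)) := by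
      intro t h
      have h1 : f s ^ t * c = f s ^ (t - e) * f b := by
        rw [hpowsplit t (le_trans (Nat.le_add_left e m) h)]
        linear_combination (f s ^ (t - e)) * hbe
      rw [h1, pow_split f s (m := m) (t := t - e) (by omega) b]
    by_cases hqi : q = i
    · by_cases hpj : p = j
      · -- hard case : conjugation by `Em j i c`
        rw [hpj, hqi]
        -- pick a third index k
        have hcard : 0 < ({i, j}ᶜ : Finset (Fin n)).card := by
          have h2 : ({i, j} : Finset (Fin n)).card ≤ 2 :=
            le_trans (Finset.card_insert_le i {j}) (by simp)
          rw [Finset.card_compl]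
          simp only [Fintype.card_fin]
          omega
        obtain ⟨k, hk⟩ := Finset.card_pos.mp hcard
        simp only [Finset.mem_compl, Finset.mem_insert, Finset.mem_singleton, not_or] at hk
        obtain ⟨hki, hkj⟩ := hk
        have hik : i ≠ k := Ne.symm hki
        have hjk : j ≠ k := Ne.symm hkj
        set l₁ := m + e + 1 with hl₁
        set l₂ := l - l₁ with hl₂
        have hll : l₁ + l₂ = l := by omega
        have hz : f s ^ l * f x = f s ^ l₁ * (f s ^ l₂ * f x) := by
          rw [← mul_assoc, ← pow_add, hll]
        have e1 : f (s ^ m * s ^ (l₁ - m)) = f s ^ l₁ := (hpow l₁ (by omega)).symm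
        have e2 : f (s ^ m * (s ^ (l₁ - e - m) * b)) = f s ^ l₁ * c := (hc1 l₁ (by omega)).symm
        have e3 : f (s ^ m * -(s ^ (l₂ - e - m) * (x * b))) = -(f s ^ l₂ * f x * c) := by
          rw [mul_neg, map_neg, hc l₂ x (by omega)]
        have e4 : f (s ^ m * (s ^ (l₂ - m) * x)) = f s ^ l₂ * f x :=
          (pow_split f s (m := m) (t := l₂) (by omega) x).symm
        have e5 : f (s ^ m * -s ^ (l₁ - m)) = -(f s ^ l₁) := by
          rw [mul_neg, map_neg, ← hpow l₁ (by omega)]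
        have e6 : f (s ^ m * -(s ^ (l₁ - e - m) * b)) = -(f s ^ l₁ * c) := by
          rw [mul_neg, map_neg, hc1 l₁ (by omega)]
        have e7 : f (s ^ m * (s ^ (l₂ - e - m) * (x * b))) = f s ^ l₂ * f x * c :=
          (hc l₂ x (by omega)).symm
        have e8 : f (s ^ m * -(s ^ (l₂ - m) * x)) = -(f s ^ l₂ * f x) := by
          rw [mul_neg, map_neg, ← pow_split f s (m := m) (t := l₂) (by omega) x]
        refine ⟨((Em i k (s^m * s^(l₁-m)) * Em j k (s^m * (s^(l₁-e-m)*b))) *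
            (Em k i (s^m * -(s^(l₂-e-m)*(x*b))) * Em k j (s^m * (s^(l₂-m)*x)))) *
            ((Em i k (s^m * -s^(l₁-m)) * Em j k (s^m * -(s^(l₁-e-m)*b))) *
            (Em k i (s^m * (s^(l₂-e-m)*(x*b))) * Em k j (s^m * -(s^(l₂-m)*x)))), ?_, ?_⟩
        · exact mul_mem (mul_mem
            (mul_mem (gen_mem_elemDiv s m hik _) (gen_mem_elemDiv s m hjk _))
            (mul_mem (gen_mem_elemDiv s m hki _) (gen_mem_elemDiv s m hkj _)))
            (mul_mem
            (mul_mem (gen_mem_elemDiv s m hik _) (gen_mem_elemDiv s m hjk _))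
            (mul_mem (gen_mem_elemDiv s m hki _) (gen_mem_elemDiv s m hkj _)))
        · rw [hz, show (1 + single j i c : Matrix (Fin n) (Fin n) B)
              = Em j i c from rfl,
            caseD hij hik hjk c (f s ^ l₁) (f s ^ l₂ * f x)]
          simp only [Matrix.map_mul, map_Em]
          rw [e1, e2, e3, e4, e5, e6, e7, e8]
      · -- caseB : q = i, p ≠ j
        rw [hqi]
        have hpi : p ≠ i := fun h => hpq (h.trans hqi.symm)
        have ee : c * (f s ^ l * f x) = f (s ^ m * (s ^ (l - e - m) * (x * b))) := by
          rw [mul_comm]; exact hc l x (by omega)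
        refine ⟨Em i j (s ^ m * (s ^ (l - m) * x)) * Em p j (s ^ m * (s ^ (l - e - m) * (x * b))),
          mul_mem (gen_mem_elemDiv s m hij _) (gen_mem_elemDiv s m (by exact hpj) _), ?_⟩
        rw [show (1 + single p i c : Matrix (Fin n) (Fin n) B) = Em p i c from rfl,
          caseB hpi hij (Ne.symm hpj) c (f s ^ l * f x), Matrix.map_mul, map_Em, map_Em,
          ← pow_split f s (m := m) (t := l) (by omega) x, ← ee]
    · by_cases hpj : p = j
      · -- caseC : p = j, q ≠ i
        rw [hpj]
        have hjq : j ≠ q := fun h => hpq (by rw [hpj, h])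
        have ee : f s ^ l * f x * (-c) = f (s ^ m * -(s ^ (l - e - m) * (x * b))) := by
          rw [mul_neg, hc l x (by omega), ← map_neg, ← mul_neg]
        refine ⟨Em i j (s ^ m * (s ^ (l - m) * x)) * Em i q (s ^ m * -(s ^ (l - e - m) * (x * b))),
          mul_mem (gen_mem_elemDiv s m hij _) (gen_mem_elemDiv s m (fun h => hqi h.symm) _), ?_⟩
        rw [show (1 + single j q c : Matrix (Fin n) (Fin n) B) = Em j q c from rfl,
          caseC hjq (fun h => hqi h) hij c (f s ^ l * f x), Matrix.map_mul, map_Em, map_Em,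
          ← pow_split f s (m := m) (t := l) (by omega) x, ← ee]
      · -- caseA
        refine ⟨Em i j (s ^ m * (s ^ (l - m) * x)), gen_mem_elemDiv s m hij _, ?_⟩
        rw [show (1 + single p q c : Matrix (Fin n) (Fin n) B) = Em p q c from rfl,
          caseA hpq.symm (fun h => hqi h) (fun h => hpj h.symm) c (f s ^ l * f x), map_Em,
          ← pow_split f s (m := m) (t := l) (by omega) x]



lemma conj_elemDiv {A B : Type*} [CommRing A] [CommRing B] (f : A →+* B) (s : A)
    {n : ℕ} {M Minv : Matrix (Fin n) (Fin n) B} (hr : M * Minv = 1) (hl : Minv * M = 1)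
    {m N₁ : ℕ}
    (hP : ∀ (i j : Fin n) (x : A) (l : ℕ), i ≠ j → N₁ ≤ l →
      ∃ ε ∈ elemDiv A n s m, M * (1 + single i j (f s ^ l * f x)) * Minv = ε.map f) :
    ∀ ε₂ ∈ elemDiv A n s N₁, ∃ ε ∈ elemDiv A n s m, M * ε₂.map f * Minv = ε.map f := by
  intro ε₂ hε₂
  induction hε₂ using Submonoid.closure_induction with
  | one => exact ⟨1, one_mem _, by rw [Matrix.map_one f f.map_zero f.map_one, mul_one, hr]⟩
  | mem g hg =>
    obtain ⟨i', j', x', hij', rfl⟩ := hg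
    obtain ⟨ε, hε, hc⟩ := hP i' j' x' N₁ hij' le_rfl
    refine ⟨ε, hε, ?_⟩
    rw [map_Em, _root_.map_mul, map_pow]
    exact hc
  | mul a b ha hb iha ihb =>
    obtain ⟨εa, hεa, hca⟩ := iha
    obtain ⟨εb, hεb, hcb⟩ := ihb
    refine ⟨εa * εb, mul_mem hεa hεb, ?_⟩
    rw [Matrix.map_mul, Matrix.map_mul, ← hca, ← hcb]
    calc M * (a.map (⇑f) * b.map (⇑f)) * Minv
        = M * a.map (⇑f) * (b.map (⇑f) * Minv) := by simp only [mul_assoc]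
      _ = M * a.map (⇑f) * (Minv * M * (b.map (⇑f) * Minv)) := by rw [hl, one_mul]
      _ = M * a.map (⇑f) * Minv * (M * b.map (⇑f) * Minv) := by simp only [mul_assoc]

theorem telescope {A B : Type*} [CommRing A] [CommRing B] (f : A →+* B) (s : A)
    (hsurj : ∀ t : B, ∃ (a : A) (e : ℕ), t * f s ^ e = f a)
    {n : ℕ} (hn : 3 ≤ n) (L : List ((Fin n × Fin n) × (ℕ → B) × B))
    (hne : ∀ z ∈ L, z.1.1 ≠ z.1.2)
    (hdvd : ∀ z ∈ L, ∀ m : ℕ, ∃ N, ∀ l, N ≤ l → ∃ cA : A,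
      z.2.1 l - z.2.2 = f s ^ m * f cA) :
    ∀ m : ℕ, ∃ N, ∀ l, N ≤ l → ∃ ε ∈ elemDiv A n s m,
      (L.map (fun z => Em z.1.1 z.1.2 (z.2.1 l))).prod
        = ε.map f * (L.map (fun z => Em z.1.1 z.1.2 z.2.2)).prod := by
  induction L with
  | nil =>
    intro m
    exact ⟨0, fun l _ => ⟨1, one_mem _, by
      simp only [List.map_nil, List.prod_nil, Matrix.map_one f f.map_zero f.map_one, mul_one]⟩⟩
  | cons z L' IH =>
    intro m
    have hzne : z.1.1 ≠ z.1.2 := hne z List.mem_cons_self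
    have hGmem : Em z.1.1 z.1.2 z.2.2 ∈ elemGroup B n :=
      Submonoid.subset_closure ⟨z.1.1, z.1.2, z.2.2, hzne, rfl⟩
    obtain ⟨Ginv, hGr, hGl, P⟩ := conj_dilation f s hsurj hn hGmem
    obtain ⟨N₁, hP₁⟩ := P m
    obtain ⟨N₂, hIH⟩ := IH (fun w hw => hne w (List.mem_cons_of_mem z hw))
      (fun w hw => hdvd w (List.mem_cons_of_mem z hw)) N₁
    obtain ⟨N₃, hd⟩ := hdvd z List.mem_cons_self m
    refine ⟨max N₂ N₃, fun l hle => ?_⟩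
    obtain ⟨ε', hε', hE'⟩ := hIH l (le_trans (le_max_left _ _) hle)
    obtain ⟨cA, hcA⟩ := hd l (le_trans (le_max_right _ _) hle)
    obtain ⟨ε'', hε'', hcc⟩ := conj_elemDiv f s hGr hGl hP₁ ε' hε'
    refine ⟨Em z.1.1 z.1.2 (s ^ m * cA) * ε'',
      mul_mem (gen_mem_elemDiv s m hzne cA) hε'', ?_⟩
    have hsplit : Em z.1.1 z.1.2 (z.2.1 l)
        = Em z.1.1 z.1.2 (z.2.1 l - z.2.2) * Em z.1.1 z.1.2 z.2.2 := by
      rw [Em_mul_same hzne.symm, sub_add_cancel]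
    have harg : Em z.1.1 z.1.2 (z.2.1 l - z.2.2)
        = (Em z.1.1 z.1.2 (s ^ m * cA)).map f := by
      rw [map_Em, _root_.map_mul, map_pow, ← hcA]
    calc ((z :: L').map (fun w => Em w.1.1 w.1.2 (w.2.1 l))).prod
        = Em z.1.1 z.1.2 (z.2.1 l) * (L'.map (fun w => Em w.1.1 w.1.2 (w.2.1 l))).prod := by
          rw [List.map_cons, List.prod_cons]
      _ = Em z.1.1 z.1.2 (z.2.1 l - z.2.2) * Em z.1.1 z.1.2 z.2.2 *
            (ε'.map (⇑f) * (L'.map (fun w => Em w.1.1 w.1.2 w.2.2)).prod) := by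
          rw [← hsplit, hE']
      _ = Em z.1.1 z.1.2 (z.2.1 l - z.2.2) *
            (Em z.1.1 z.1.2 z.2.2 * ε'.map (⇑f) * Ginv) *
            (Em z.1.1 z.1.2 z.2.2 * (L'.map (fun w => Em w.1.1 w.1.2 w.2.2)).prod) := by
          rw [show Em z.1.1 z.1.2 (z.2.1 l - z.2.2) *
              (Em z.1.1 z.1.2 z.2.2 * ε'.map (⇑f) * Ginv) *
              (Em z.1.1 z.1.2 z.2.2 * (L'.map (fun w => Em w.1.1 w.1.2 w.2.2)).prod)
              = Em z.1.1 z.1.2 (z.2.1 l - z.2.2) * (Em z.1.1 z.1.2 z.2.2 * (ε'.map (⇑f) *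
                ((Ginv * Em z.1.1 z.1.2 z.2.2) * (L'.map (fun w => Em w.1.1 w.1.2 w.2.2)).prod)))
              by simp only [mul_assoc], hGl, one_mul]
          simp only [mul_assoc]
      _ = (Em z.1.1 z.1.2 (s ^ m * cA)).map (⇑f) * (ε''.map (⇑f)) *
            ((z :: L').map (fun w => Em w.1.1 w.1.2 w.2.2)).prod := by
          rw [← harg, hcc, List.map_cons, List.prod_cons]
      _ = _ := by rw [List.map_cons, List.prod_cons, Matrix.map_mul]
end GDL


/-- Graded Dilation Lemma, linear case.  If `A` is a commutative Noetherian ℕ-graded ring,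
`n ≥ 3`, `s ∈ A₀` a non-zerodivisor, `α ∈ GLₙ(A)` with `α⁺(0) = Iₙ` and the image `α_s` of
`α` in `GLₙ(A_s)` lies in `Eₙ(A_s)`, then `α⁺(sˡ) ∈ Eₙ(A)` for all `l ≫ 0`. -/
theorem graded_dilation_linear {A : Type*} [CommRing A] [IsNoetherianRing A]
    (𝒜 : ℕ → AddSubgroup A) [GradedRing 𝒜] (n : ℕ) (hn : 3 ≤ n)
    (s : A) (hs0 : s ∈ 𝒜 0) (hs : s ∈ nonZeroDivisors A)
    (α : Matrix (Fin n) (Fin n) A) (hα : IsUnit α)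
    (h0 : swMatrix 𝒜 0 α = 1)
    (hloc : (algebraMap A (Localization.Away s)).mapMatrix α ∈
      elemGroup (Localization.Away s) n) :
    ∃ l₀ : ℕ, ∀ l ≥ l₀, swMatrix 𝒜 (s ^ l) α ∈ elemGroup A n := by
  classical
  set B := Localization.Away s with hB
  set f : A →+* B := algebraMap A B with hfdef
  have hse : ∀ e : ℕ, s ^ e ∈ 𝒜 0 := fun e => by simpa using SetLike.pow_mem_graded e hs0
  have hsu : IsUnit (f s) := IsLocalization.Away.algebraMap_isUnit s
  have hinj : Function.Injective f := IsLocalization.injective B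
    (M := Submonoid.powers s)
    (fun x hx => by obtain ⟨k, rfl⟩ := hx; exact pow_mem hs k)
  have hsurj : ∀ t : B, ∃ (a : A) (e : ℕ), t * f s ^ e = f a := by
    intro t
    obtain ⟨⟨a, sk⟩, h⟩ := IsLocalization.surj (M := Submonoid.powers s) t
    obtain ⟨e, he⟩ := sk.property
    refine ⟨a, e, ?_⟩
    have he' : s ^ e = (sk : A) := he
    rw [← map_pow, he']
    exact h
  have hfix : ∀ u : A, (swPlusHom 𝒜 u) s = s := fun u => swPlus_of_mem_zero 𝒜 u hs0
  have hcomap : ∀ u : A, Submonoid.powers s ≤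
      Submonoid.comap (swPlusHom 𝒜 u) (Submonoid.powers s) := by
    intro u x hx
    obtain ⟨k, hk⟩ := hx
    refine ⟨k, ?_⟩
    rw [← hk, map_pow, hfix u]
  let Φ : A → (B →+* B) := fun u => IsLocalization.map B (swPlusHom 𝒜 u) (hcomap u)
  have hΦf : ∀ (u a : A), Φ u (f a) = f (swPlus 𝒜 u a) :=
    fun u a => IsLocalization.map_eq (hcomap u) a
  -- divisibility of `Φ (s^l) t - Φ 0 t`
  have hdvd0 : ∀ t : B, ∀ m : ℕ, ∃ N, ∀ l, N ≤ l →
      ∃ cA : A, Φ (s ^ l) t - Φ 0 t = f s ^ m * f cA := by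
    intro t m
    obtain ⟨a, e, he⟩ := hsurj t
    refine ⟨m + e, fun l hl => ?_⟩
    obtain ⟨c, hc⟩ := swPlus_sub_dvd 𝒜 s l a
    refine ⟨s ^ (l - e - m) * c, ?_⟩
    have hkey : ∀ u : A, Φ u t * f s ^ e = f (swPlus 𝒜 u a) := by
      intro u
      have h1 : Φ u (f (s ^ e)) = f (s ^ e) := by
        rw [hΦf, swPlus_of_mem_zero 𝒜 u (hse e)]
      calc Φ u t * f s ^ e = Φ u t * Φ u (f (s ^ e)) := by rw [h1, map_pow]
        _ = Φ u (t * f (s ^ e)) := (map_mul _ _ _).symm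
        _ = Φ u (f a) := by rw [map_pow f s e, he]
        _ = f (swPlus 𝒜 u a) := hΦf u a
    apply IsUnit.mul_right_cancel (hsu.pow e)
    have harith : m + (l - e - m) + e = l := by omega
    calc (Φ (s ^ l) t - Φ 0 t) * f s ^ e
        = Φ (s ^ l) t * f s ^ e - Φ 0 t * f s ^ e := by ring
      _ = f (swPlus 𝒜 (s ^ l) a - swPlus 𝒜 0 a) := by rw [hkey, hkey, map_sub]
      _ = f (s ^ l * c) := by rw [hc]
      _ = f s ^ l * f c := by rw [_root_.map_mul, map_pow f s l]
      _ = f s ^ (m + (l - e - m) + e) * f c := by rw [harith]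
      _ = f s ^ m * f (s ^ (l - e - m) * c) * f s ^ e := by
          rw [_root_.map_mul, map_pow f s (l - e - m)]; ring
  -- produce the list of elementary factors of `α` over `B`
  obtain ⟨L₀, hL₀mem, hL₀prod⟩ := Submonoid.exists_list_of_mem_closure hloc
  have hlist : ∀ L₀ : List (Matrix (Fin n) (Fin n) B),
      (∀ y ∈ L₀, ∃ (i j : Fin n) (t : B), i ≠ j ∧ y = 1 + single i j t) →
      ∃ L : List ((Fin n × Fin n) × (ℕ → B) × B),
        (∀ z ∈ L, z.1.1 ≠ z.1.2) ∧
        (∀ z ∈ L, ∀ m : ℕ, ∃ N, ∀ l, N ≤ l →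
          ∃ cA : A, z.2.1 l - z.2.2 = f s ^ m * f cA) ∧
        (∀ l : ℕ, (L.map (fun z => GDL.Em z.1.1 z.1.2 (z.2.1 l))).prod
          = (L₀.map (fun y => y.map (Φ (s ^ l)))).prod) ∧
        ((L.map (fun z => GDL.Em z.1.1 z.1.2 z.2.2)).prod
          = (L₀.map (fun y => y.map (Φ 0))).prod) := by
    intro L₀ hmem
    induction L₀ with
    | nil => exact ⟨[], by simp, by simp, by simp, by simp⟩
    | cons y L₀' ih =>
      obtain ⟨i, j, t, hij, rfl⟩ := hmem y List.mem_cons_self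
      obtain ⟨L', h1, h2, h3, h4⟩ := ih (fun w hw => hmem w (List.mem_cons_of_mem _ hw))
      refine ⟨((i, j), fun l => Φ (s ^ l) t, Φ 0 t) :: L', ?_, ?_, ?_, ?_⟩
      · intro z hz
        rcases List.mem_cons.mp hz with rfl | hz'
        · exact hij
        · exact h1 z hz'
      · intro z hz
        rcases List.mem_cons.mp hz with rfl | hz'
        · exact hdvd0 t
        · exact h2 z hz'
      · intro l
        rw [List.map_cons, List.prod_cons, List.map_cons, List.prod_cons, h3 l,
          GDL.map_Em (Φ (s ^ l)) i j t]
      · rw [List.map_cons, List.prod_cons, List.map_cons, List.prod_cons, h4,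
          GDL.map_Em (Φ 0) i j t]
  obtain ⟨L, hLne, hLdvd, hLu, hLv⟩ := hlist L₀ hL₀mem
  obtain ⟨N, hN⟩ := GDL.telescope f s hsurj hn L hLne hLdvd 0
  have hprodmap : ∀ (g : B →+* B) (L₁ : List (Matrix (Fin n) (Fin n) B)),
      (L₁.map (fun y => y.map g)).prod = L₁.prod.map g := by
    intro g L₁
    induction L₁ with
    | nil => simp [Matrix.map_one g g.map_zero g.map_one]
    | cons y L₁' ih =>
      rw [List.map_cons, List.prod_cons, List.prod_cons, Matrix.map_mul, ih]
  refine ⟨N, fun l hl => ?_⟩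
  obtain ⟨ε, hε, heq⟩ := hN l hl
  have hmapu : (f.mapMatrix α).map (Φ (s ^ l)) = (swMatrix 𝒜 (s ^ l) α).map f := by
    ext i j
    simp only [RingHom.mapMatrix_apply, Matrix.map_apply, swMatrix, Matrix.of_apply]
    exact hΦf _ _
  have hmapv : (f.mapMatrix α).map (Φ 0) = (swMatrix 𝒜 0 α).map f := by
    ext i j
    simp only [RingHom.mapMatrix_apply, Matrix.map_apply, swMatrix, Matrix.of_apply]
    exact hΦf _ _
  have h2 : (L.map (fun z => GDL.Em z.1.1 z.1.2 z.2.2)).prod = 1 := by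
    rw [hLv, hprodmap, hL₀prod, hmapv, h0, Matrix.map_one f f.map_zero f.map_one]
  have hu : (swMatrix 𝒜 (s ^ l) α).map f = ε.map f := by
    rw [← hmapu, ← hL₀prod, ← hprodmap, ← hLu l, heq, h2, mul_one]
  have hfin : swMatrix 𝒜 (s ^ l) α = ε := by
    ext i j
    exact hinj (by
      have h3 := Matrix.ext_iff.mpr hu i j
      simpa only [Matrix.map_apply] using h3)
  rw [hfin]
  exact GDL.elemDiv_le s 0 hε
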